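/- Let (X,d) be a compact metric space and let (X, f_{1,∞}) be a non-autonomous discrete system such that f_{1,∞} is feeble open, each f_n is surjective, (f_n) converges uniformly to a continuous map f : X → X, and the compositions (f_r^k) converge collectively to (f^k). If f_{1,∞} is syndetically transitive and weakly mixing, then f_{1,∞} is multi-transitive. -/

import Mathlib

open Set Filter

/-- `nds f i n` is the `n`-step composition `f_i^n = f (i+n-1) ∘ ⋯ ∘ f i`, with `nds f i 0 = id`. -/
def nds {X : Type*} (f : ℕ → X → X) (i : ℕ) : ℕ → X → X
  | 0 => id
  | n + 1 => f (i + n) ∘ nds f i n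

section TopDefs

variable {X : Type*} [TopologicalSpace X]

/-- The NDS `f_{1,∞}` is (topologically) transitive. -/
def NDSTransitive (f : ℕ → X → X) : Prop :=
  ∀ U V : Set X, IsOpen U → U.Nonempty → IsOpen V → V.Nonempty →
    ∃ n : ℕ, 0 < n ∧ (nds f 1 n '' U ∩ V).Nonempty

/-- The NDS `f_{1,∞}` is mixing. -/
def NDSMixing (f : ℕ → X → X) : Prop :=
  ∀ U V : Set X, IsOpen U → U.Nonempty → IsOpen V → V.Nonempty →
    ∃ N : ℕ, ∀ n : ℕ, N ≤ n → (nds f 1 n '' U ∩ V).Nonempty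

/-- The NDS `f_{1,∞}` is weakly mixing. -/
def NDSWeaklyMixing (f : ℕ → X → X) : Prop :=
  ∀ U₁ U₂ V₁ V₂ : Set X, IsOpen U₁ → U₁.Nonempty → IsOpen U₂ → U₂.Nonempty →
    IsOpen V₁ → V₁.Nonempty → IsOpen V₂ → V₂.Nonempty →
    ∃ n : ℕ, 0 < n ∧ (nds f 1 n '' U₁ ∩ V₁).Nonempty ∧ (nds f 1 n '' U₂ ∩ V₂).Nonempty

/-- The NDS `f_{1,∞}` is multi-transitive. -/
def NDSMultiTransitive (f : ℕ → X → X) : Prop :=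
  ∀ m : ℕ, 0 < m → ∀ U V : Fin m → Set X,
    (∀ j, IsOpen (U j)) → (∀ j, (U j).Nonempty) →
    (∀ j, IsOpen (V j)) → (∀ j, (V j).Nonempty) →
    ∃ l : ℕ, 0 < l ∧ ∀ j : Fin m, (nds f 1 (l * (j.1 + 1)) '' U j ∩ V j).Nonempty

/-- The NDS `f_{1,∞}` is totally transitive. -/
def NDSTotallyTransitive (f : ℕ → X → X) : Prop :=
  ∀ k : ℕ, 0 < k → ∀ U V : Set X, IsOpen U → U.Nonempty → IsOpen V → V.Nonempty →
    ∃ n : ℕ, 0 < n ∧ (nds f 1 (n * k) '' U ∩ V).Nonempty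

/-- The NDS `f_{1,∞}` is minimal: every orbit is dense. -/
def NDSMinimal (f : ℕ → X → X) : Prop :=
  ∀ x : X, Dense (Set.range fun n : ℕ => nds f 1 n x)

/-- The NDS `f_{1,∞}` is feeble open. -/
def FeebleOpen (f : ℕ → X → X) : Prop :=
  ∀ i : ℕ, 1 ≤ i → ∀ U : Set X, IsOpen U → U.Nonempty → (interior (f i '' U)).Nonempty

/-- A set of positive integers is syndetic (has bounded gaps). -/
def SyndeticSet (A : Set ℕ) : Prop :=
  ∃ M : ℕ, ∀ i : ℕ, 1 ≤ i → ∃ j ∈ A, i ≤ j ∧ j ≤ i + M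

/-- A set of positive integers is thick (contains arbitrarily long runs). -/
def ThickSet (A : Set ℕ) : Prop :=
  ∀ p : ℕ, ∃ n : ℕ, ∀ j : ℕ, n ≤ j → j ≤ n + p → j ∈ A

/-- The NDS `f_{1,∞}` is syndetically transitive. -/
def NDSSyndeticallyTransitive (f : ℕ → X → X) : Prop :=
  ∀ U V : Set X, IsOpen U → U.Nonempty → IsOpen V → V.Nonempty →
    SyndeticSet {n : ℕ | 0 < n ∧ (nds f 1 n '' U ∩ V).Nonempty}

/-- The NDS `f_{1,∞}` has dense periodic points. -/
def NDSDensePeriodicPoints (f : ℕ → X → X) : Prop :=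
  Dense {x : X | ∃ k : ℕ, 0 < k ∧ ∀ n : ℕ, 0 < n → nds f 1 (k * n) x = x}

/-- The NDS `f_{k,∞}` is strongly transitive. -/
def NDSStronglyTransitiveFrom (f : ℕ → X → X) (k : ℕ) : Prop :=
  ∀ U : Set X, IsOpen U → U.Nonempty →
    ∃ M : ℕ, 0 < M ∧ (⋃ i ∈ Set.Icc 1 M, nds f k i '' U) = Set.univ

/-- An autonomous map is transitive. -/
def MapTransitive {Y : Type*} [TopologicalSpace Y] (g : Y → Y) : Prop :=
  ∀ U V : Set Y, IsOpen U → U.Nonempty → IsOpen V → V.Nonempty →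
    ∃ n : ℕ, 0 < n ∧ (g^[n] '' U ∩ V).Nonempty

/-- An autonomous map is weakly mixing. -/
def MapWeaklyMixing {Y : Type*} [TopologicalSpace Y] (g : Y → Y) : Prop :=
  ∀ U₁ U₂ V₁ V₂ : Set Y, IsOpen U₁ → U₁.Nonempty → IsOpen U₂ → U₂.Nonempty →
    IsOpen V₁ → V₁.Nonempty → IsOpen V₂ → V₂.Nonempty →
    ∃ n : ℕ, 0 < n ∧ (g^[n] '' U₁ ∩ V₁).Nonempty ∧ (g^[n] '' U₂ ∩ V₂).Nonempty

/-- An autonomous map is totally transitive. -/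
def MapTotallyTransitive {Y : Type*} [TopologicalSpace Y] (g : Y → Y) : Prop :=
  ∀ k : ℕ, 0 < k → ∀ U V : Set Y, IsOpen U → U.Nonempty → IsOpen V → V.Nonempty →
    ∃ n : ℕ, 0 < n ∧ (g^[n * k] '' U ∩ V).Nonempty

/-- An autonomous map is syndetically transitive. -/
def MapSyndeticallyTransitive {Y : Type*} [TopologicalSpace Y] (g : Y → Y) : Prop :=
  ∀ U V : Set Y, IsOpen U → U.Nonempty → IsOpen V → V.Nonempty →
    SyndeticSet {n : ℕ | 0 < n ∧ (g^[n] '' U ∩ V).Nonempty}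

/-- An autonomous map is minimal. -/
def MapMinimal {Y : Type*} [TopologicalSpace Y] (g : Y → Y) : Prop :=
  ∀ x : Y, Dense (Set.range fun n : ℕ => g^[n] x)

end TopDefs

section MetricDefs

variable {X : Type*} [MetricSpace X]

/-- The compositions `(f_r^k)` converge collectively to `(f^k)` (w.r.t. the supremum metric). -/
def CollectivelyConverges (f : ℕ → X → X) (g : X → X) : Prop :=
  ∀ ε : ℝ, 0 < ε → ∃ r₀ : ℕ, ∀ r : ℕ, r₀ ≤ r → ∀ k : ℕ, 1 ≤ k → ∀ x : X,
    dist (nds f r k x) (g^[k] x) < ε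

/-- `N(U, δ)`: the times at which the NDS is `δ`-sensitive on `U`. -/
def SensSet (f : ℕ → X → X) (U : Set X) (δ : ℝ) : Set ℕ :=
  {n : ℕ | 0 < n ∧ ∃ x ∈ U, ∃ y ∈ U, δ < dist (nds f 1 n x) (nds f 1 n y)}

/-- The NDS `f_{1,∞}` is multi-sensitive. -/
def NDSMultiSensitive (f : ℕ → X → X) : Prop :=
  ∃ δ : ℝ, 0 < δ ∧ ∀ m : ℕ, 0 < m → ∀ U : Fin m → Set X,
    (∀ i, IsOpen (U i)) → (∀ i, (U i).Nonempty) → (⋂ i, SensSet f (U i) δ).Nonempty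

/-- The NDS `f_{1,∞}` is thickly sensitive. -/
def NDSThicklySensitive (f : ℕ → X → X) : Prop :=
  ∃ δ : ℝ, 0 < δ ∧ ∀ U : Set X, IsOpen U → U.Nonempty → ThickSet (SensSet f U δ)

/-- The NDS `f_{1,∞}` is syndetically sensitive. -/
def NDSSyndeticallySensitive (f : ℕ → X → X) : Prop :=
  ∃ δ : ℝ, 0 < δ ∧ ∀ U : Set X, IsOpen U → U.Nonempty → SyndeticSet (SensSet f U δ)

/-- The NDS `f_{1,∞}` is mildly mixing: its product with every transitive NDS on a compact
metric space is transitive. -/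
def NDSMildlyMixing (f : ℕ → X → X) : Prop :=
  ∀ (Y : Type*) [MetricSpace Y] [CompactSpace Y] (g : ℕ → Y → Y),
    (∀ n : ℕ, 1 ≤ n → Continuous (g n)) → NDSTransitive g →
    NDSTransitive (fun n (p : X × Y) => (f n p.1, g n p.2))

/-- The NDS `f_{1,∞}` is Li–Yorke chaotic. -/
def LiYorkeChaotic (f : ℕ → X → X) : Prop :=
  ∃ S : Set X, ¬S.Countable ∧ ∀ x ∈ S, ∀ y ∈ S, x ≠ y →
    Filter.liminf (fun n : ℕ => dist (nds f 1 n x) (nds f 1 n y)) Filter.atTop = 0 ∧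
    0 < Filter.limsup (fun n : ℕ => dist (nds f 1 n x) (nds f 1 n y)) Filter.atTop

end MetricDefs

/-!
Collective convergence makes the limit map `F` shadow the tails `f_{c+1}^k` of the system
uniformly in `k`, so `F` inherits weak mixing and syndetic transitivity from `f_{1,∞}` (weak
mixing of a nontrivial Hausdorff system forbids isolated points, which yields hitting times
beyond any bound). For the autonomous map `F`, Furstenberg's intersection lemma realises the
times `n` with `n, n + 1, …, n + p` all in `N_F(U, V)` as the hitting times of a single pair of
open sets, so syndetic transitivity makes `N_F(U, V)` thickly syndetic. Thickly syndetic sets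
form a filter stable under `A ↦ c + A` and `A ↦ {l | q l ∈ A}`; intersecting over `j` the sets
`{l | (j + 1) l ∈ c_j + N_F(W_j, V_j)}`, where feeble openness gives `W_j ⊆ f_1^{c_j}(U_j)`, yields
the common step `l`.
-/

open Topology

theorem SyndeticSet.mono {A B : Set ℕ} (hA : SyndeticSet A) (hAB : A ⊆ B) : SyndeticSet B := by
  obtain ⟨M, hM⟩ := hA
  refine ⟨M, fun i hi => ?_⟩
  obtain ⟨j, hj, hij, hjM⟩ := hM i hi
  exact ⟨j, hAB hj, hij, hjM⟩

theorem SyndeticSet.pos_add_left {A : Set ℕ} (hA : SyndeticSet A) (c : ℕ) :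
    SyndeticSet {k | 0 < k ∧ c + k ∈ A} := by
  obtain ⟨M, hM⟩ := hA
  refine ⟨M, fun i hi => ?_⟩
  obtain ⟨j, hj, hij, hjM⟩ := hM (c + i) (by omega)
  exact ⟨j - c, ⟨by omega, by rwa [Nat.add_sub_cancel' (by omega)]⟩, by omega, by omega⟩

def thicklySyndetic : Filter ℕ where
  sets := {A | ∀ p, SyndeticSet {n | ∀ i ≤ p, n + i ∈ A}}
  univ_sets _ := ⟨0, fun i _ => ⟨i, fun _ _ => trivial, le_rfl, le_rfl⟩⟩
  sets_of_superset hA hAB p := (hA p).mono fun _ hn i hi => hAB (hn i hi)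
  inter_sets := by
    intro A B hA hB p
    obtain ⟨MA, hMA⟩ := hA p
    obtain ⟨MB, hMB⟩ := hB (p + MA)
    refine ⟨MA + MB, fun i hi => ?_⟩
    obtain ⟨n, hn, hin, hni⟩ := hMB i hi
    obtain ⟨n', hn', hnn', hn'n⟩ := hMA n (hi.trans hin)
    refine ⟨n', fun j hj => ⟨hn' j hj, ?_⟩, by omega, by omega⟩
    simpa only [show n + (n' - n + j) = n' + j by omega] using hn (n' - n + j) (by omega)

instance thicklySyndetic_neBot : thicklySyndetic.NeBot := by
  refine Filter.forall_mem_nonempty_iff_neBot.1 fun A hA => ?_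
  obtain ⟨M, hM⟩ := hA 0
  obtain ⟨n, hn, -⟩ := hM 1 le_rfl
  exact ⟨n, hn 0 le_rfl⟩

theorem image_add_left_mem_thicklySyndetic {A : Set ℕ} (hA : A ∈ thicklySyndetic) (c : ℕ) :
    (c + ·) '' A ∈ thicklySyndetic := by
  intro p
  obtain ⟨M, hM⟩ := hA p
  refine ⟨M + c, fun i hi => ?_⟩
  obtain ⟨n, hn, hin, hnM⟩ := hM i hi
  exact ⟨c + n, fun j hj => ⟨n + j, hn j hj, (add_assoc c n j).symm⟩, by omega, by omega⟩

theorem tendsto_mul_left_thicklySyndetic {q : ℕ} (hq : 0 < q) :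
    Tendsto (q * ·) thicklySyndetic thicklySyndetic := by
  intro A hA p
  obtain ⟨M, hM⟩ := hA (q * (p + 1))
  refine ⟨M + 1, fun i hi => ?_⟩
  obtain ⟨n, hn, hin, hnM⟩ := hM (q * i) (Nat.one_le_iff_ne_zero.2 (by positivity))
  have hdiv := Nat.div_add_mod n q
  have hmod := Nat.mod_lt n hq
  set d := n / q
  -- `d + 1` is the least `l` with `n < q * l`, so `q * l, …, q * (l + p)` lie in
  -- `[n, n + q * (p + 1)]`
  refine ⟨d + 1, fun j hj => ?_, ?_, ?_⟩
  · have hqj : q * j ≤ q * p := Nat.mul_le_mul_left q hj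
    have e₁ : q * (d + 1 + j) = q * d + q + q * j := by ring
    have e₂ : q * (p + 1) = q * p + q := by ring
    have h := hn (q * (d + 1 + j) - n) (by omega)
    rwa [show n + (q * (d + 1 + j) - n) = q * (d + 1 + j) by omega] at h
  · have e : q * (d + 1) = q * d + q := by ring
    have : q * i < q * (d + 1) := by omega
    exact (Nat.lt_of_mul_lt_mul_left this).le
  · have hM : M ≤ q * M := Nat.le_mul_of_pos_left M hq
    have e : q * (i + M) = q * i + q * M := by ring
    have : d ≤ i + M := Nat.le_of_mul_le_mul_left (by omega) hq
    omega

def hittingTimes {Y : Type*} (G : Y → Y) (U V : Set Y) : Set ℕ :=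
  {n | 0 < n ∧ (G^[n] '' U ∩ V).Nonempty}

theorem add_mem_hittingTimes {Y : Type*} {G : Y → Y} {U V : Set Y} {n i : ℕ}
    (h : n ∈ hittingTimes G U (G^[i] ⁻¹' V)) :
    n + i ∈ hittingTimes G U V := by
  obtain ⟨hn, _, ⟨x, hx, rfl⟩, hxV⟩ := h
  refine ⟨by omega, G^[n + i] x, mem_image_of_mem _ hx, ?_⟩
  rwa [add_comm, Function.iterate_add_apply]

section Autonomous

variable {Y : Type*} [TopologicalSpace Y] {G : Y → Y}

theorem DenseRange.iterate (hd : DenseRange G) (hG : Continuous G) : ∀ n, DenseRange G^[n]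
  | 0 => denseRange_id
  | n + 1 => by
    rw [Function.iterate_succ']
    exact hd.comp (hd.iterate hG n) hG

theorem MapWeaklyMixing.denseRange (hwm : MapWeaklyMixing G) : DenseRange G := by
  refine dense_iff_inter_open.2 fun V hV ⟨v, hv⟩ => ?_
  obtain ⟨n, hn, ⟨_, ⟨x, -, rfl⟩, hxV⟩, -⟩ :=
    hwm univ univ V V isOpen_univ ⟨v, trivial⟩ isOpen_univ ⟨v, trivial⟩ hV ⟨v, hv⟩ hV ⟨v, hv⟩
  obtain ⟨m, rfl⟩ := Nat.exists_eq_add_of_lt hn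
  rw [Nat.zero_add, Function.iterate_succ_apply'] at hxV
  exact ⟨_, hxV, mem_range_self _⟩

/-- Furstenberg's intersection lemma. -/
theorem MapWeaklyMixing.exists_hittingTimes_subset_inter (hG : Continuous G)
    (hwm : MapWeaklyMixing G) {U₁ V₁ U₂ V₂ : Set Y} (hU₁ : IsOpen U₁) (hU₁n : U₁.Nonempty)
    (hV₁ : IsOpen V₁) (hV₁n : V₁.Nonempty) (hU₂ : IsOpen U₂) (hU₂n : U₂.Nonempty)
    (hV₂ : IsOpen V₂) (hV₂n : V₂.Nonempty) :
    ∃ U V, IsOpen U ∧ U.Nonempty ∧ IsOpen V ∧ V.Nonempty ∧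
      hittingTimes G U V ⊆ hittingTimes G U₁ V₁ ∩ hittingTimes G U₂ V₂ := by
  obtain ⟨n, -, ⟨_, ⟨x, hxU₁, rfl⟩, hxU₂⟩, ⟨_, ⟨y, hyV₁, rfl⟩, hyV₂⟩⟩ :=
    hwm U₁ V₁ U₂ V₂ hU₁ hU₁n hV₁ hV₁n hU₂ hU₂n hV₂ hV₂n
  refine ⟨U₁ ∩ G^[n] ⁻¹' U₂, V₁ ∩ G^[n] ⁻¹' V₂, hU₁.inter (hU₂.preimage (hG.iterate n)),
    ⟨x, hxU₁, hxU₂⟩, hV₁.inter (hV₂.preimage (hG.iterate n)), ⟨y, hyV₁, hyV₂⟩, ?_⟩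
  rintro m ⟨hm, _, ⟨w, ⟨hwU₁, hwU₂⟩, rfl⟩, hwV₁, hwV₂⟩
  refine ⟨⟨hm, _, mem_image_of_mem _ hwU₁, hwV₁⟩, ⟨hm, _, mem_image_of_mem _ hwU₂, ?_⟩⟩
  rwa [← Function.iterate_add_apply, add_comm, Function.iterate_add_apply]

theorem hittingTimes_mem_thicklySyndetic (hG : Continuous G) (hwm : MapWeaklyMixing G)
    (hsyn : MapSyndeticallyTransitive G) {U V : Set Y} (hU : IsOpen U) (hUn : U.Nonempty)
    (hV : IsOpen V) (hVn : V.Nonempty) : hittingTimes G U V ∈ thicklySyndetic := by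
  have runs : ∀ p, ∃ U' V', IsOpen U' ∧ U'.Nonempty ∧ IsOpen V' ∧ V'.Nonempty ∧
      hittingTimes G U' V' ⊆ {n | ∀ i ≤ p, n + i ∈ hittingTimes G U V} := by
    intro p
    induction p with
    | zero => exact ⟨U, V, hU, hUn, hV, hVn, fun n hn i hi => by rwa [Nat.le_zero.1 hi]⟩
    | succ p ih =>
      obtain ⟨U', V', hU', hU'n, hV', hV'n, hsub⟩ := ih
      have hVp : IsOpen (G^[p + 1] ⁻¹' V) := hV.preimage (hG.iterate _)
      have hVpn : (G^[p + 1] ⁻¹' V).Nonempty :=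
        (hwm.denseRange.iterate hG (p + 1)).exists_mem_open hV hVn
      obtain ⟨U'', V'', hU'', hU''n, hV'', hV''n, hsub'⟩ :=
        hwm.exists_hittingTimes_subset_inter hG hU' hU'n hV' hV'n hU hUn hVp hVpn
      refine ⟨U'', V'', hU'', hU''n, hV'', hV''n, fun n hn i hi => ?_⟩
      obtain ⟨hn₁, hn₂⟩ := hsub' hn
      rcases Nat.lt_or_eq_of_le hi with hi | rfl
      · exact hsub hn₁ i (by omega)
      · exact add_mem_hittingTimes hn₂
  intro p
  obtain ⟨U', V', hU', hU'n, hV', hV'n, hsub⟩ := runs p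
  exact (hsyn U' V' hU' hU'n hV' hV'n).mono hsub

end Autonomous

section NDS

variable {X : Type*} {f : ℕ → X → X}

theorem nds_add (i a : ℕ) : ∀ b, nds f i (a + b) = nds f (i + a) b ∘ nds f i a
  | 0 => rfl
  | b + 1 => by
    rw [← add_assoc, nds, nds_add i a b, nds, add_assoc]
    rfl

theorem continuous_nds [TopologicalSpace X] (hcont : ∀ n, 1 ≤ n → Continuous (f n)) {i : ℕ}
    (hi : 1 ≤ i) : ∀ n, Continuous (nds f i n)
  | 0 => continuous_id
  | n + 1 => (hcont (i + n) (by omega)).comp (continuous_nds hcont hi n)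

theorem surjective_nds (hsurj : ∀ n, 1 ≤ n → Function.Surjective (f n)) {i : ℕ} (hi : 1 ≤ i) :
    ∀ n, Function.Surjective (nds f i n)
  | 0 => Function.surjective_id
  | n + 1 => (hsurj (i + n) (by omega)).comp (surjective_nds hsurj hi n)

theorem FeebleOpen.exists_isOpen_subset_image_nds [TopologicalSpace X] (hfo : FeebleOpen f)
    {i : ℕ} (hi : 1 ≤ i) {U : Set X} (hU : IsOpen U) (hUn : U.Nonempty) :
    ∀ n, ∃ W, IsOpen W ∧ W.Nonempty ∧ W ⊆ nds f i n '' U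
  | 0 => ⟨U, hU, hUn, by simp [nds]⟩
  | n + 1 => by
    obtain ⟨W, hW, hWn, hWU⟩ := hfo.exists_isOpen_subset_image_nds hi hU hUn n
    refine ⟨interior (f (i + n) '' W), isOpen_interior, hfo _ (by omega) W hW hWn,
      interior_subset.trans ?_⟩
    rw [nds, image_comp]
    exact image_mono hWU

theorem NDSWeaklyMixing.neBot_nhdsNE [TopologicalSpace X] [T1Space X] [Nontrivial X]
    (hwm : NDSWeaklyMixing f) (x : X) : (𝓝[≠] x).NeBot := by
  refine ⟨fun h => ?_⟩
  have hx : IsOpen {x} := (isOpen_singleton_iff_punctured_nhds x).2 h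
  obtain ⟨y, hy⟩ := exists_ne x
  obtain ⟨n, -, ⟨_, ⟨_, rfl, rfl⟩, h₁⟩, ⟨_, ⟨_, rfl, rfl⟩, h₂⟩⟩ :=
    hwm {x} {x} {x} {x}ᶜ hx (singleton_nonempty x) hx (singleton_nonempty x) hx
      (singleton_nonempty x) isClosed_singleton.isOpen_compl ⟨y, hy⟩
  exact h₂ h₁

theorem exists_isOpen_disjoint_image [TopologicalSpace X] [T2Space X] [∀ x : X, (𝓝[≠] x).NeBot]
    {g : ℕ → X → X} (hg : ∀ n, Continuous (g n)) (N : ℕ) {U V : Set X} (hU : IsOpen U)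
    (hUn : U.Nonempty) (hV : IsOpen V) (hVn : V.Nonempty) :
    ∃ U' ⊆ U, ∃ V' ⊆ V, IsOpen U' ∧ U'.Nonempty ∧ IsOpen V' ∧ V'.Nonempty ∧
      ∀ n ≤ N, Disjoint (g n '' U') V' := by
  obtain ⟨x, hx⟩ := hUn
  have horbit : ((fun n => g n x) '' Iic N).Finite := (finite_Iic N).image _
  obtain ⟨v, hv, -, hvx⟩ := (dense_univ.sdiff_finite horbit).inter_open_nonempty V hV hVn
  have hsep : ∀ᶠ p : X × X in 𝓝 (x, v), ∀ n ∈ Iic N, g n p.1 ≠ p.2 := by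
    refine (eventually_all_finite (finite_Iic N)).2 fun n hn => ?_
    exact (isOpen_ne_fun ((hg n).comp continuous_fst) continuous_snd).mem_nhds
      fun h => hvx ⟨n, hn, h⟩
  obtain ⟨U', V', hU', hxU', hV', hvV', hsub⟩ := mem_nhds_prod_iff'.1 hsep
  refine ⟨U ∩ U', inter_subset_left, V ∩ V', inter_subset_left, hU.inter hU', ⟨x, hx, hxU'⟩,
    hV.inter hV', ⟨v, hv, hvV'⟩, fun n hn => ?_⟩
  rw [disjoint_left]
  rintro _ ⟨y, ⟨-, hy⟩, rfl⟩ ⟨-, hw⟩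
  exact hsub (mk_mem_prod hy hw) n hn rfl

theorem NDSWeaklyMixing.exists_gt [TopologicalSpace X] [T2Space X]
    (hcont : ∀ n, 1 ≤ n → Continuous (f n)) (hwm : NDSWeaklyMixing f) {U₁ U₂ V₁ V₂ : Set X}
    (hU₁ : IsOpen U₁) (hU₁n : U₁.Nonempty) (hU₂ : IsOpen U₂) (hU₂n : U₂.Nonempty)
    (hV₁ : IsOpen V₁) (hV₁n : V₁.Nonempty) (hV₂ : IsOpen V₂) (hV₂n : V₂.Nonempty) (N : ℕ) :
    ∃ n, N < n ∧ (nds f 1 n '' U₁ ∩ V₁).Nonempty ∧ (nds f 1 n '' U₂ ∩ V₂).Nonempty := by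
  rcases subsingleton_or_nontrivial X with hX | hX
  · obtain ⟨x₁, hx₁⟩ := hU₁n
    obtain ⟨y₁, hy₁⟩ := hV₁n
    obtain ⟨x₂, hx₂⟩ := hU₂n
    obtain ⟨y₂, hy₂⟩ := hV₂n
    exact ⟨N + 1, N.lt_succ_self, ⟨y₁, ⟨x₁, hx₁, Subsingleton.elim _ _⟩, hy₁⟩,
      ⟨y₂, ⟨x₂, hx₂, Subsingleton.elim _ _⟩, hy₂⟩⟩
  have := hwm.neBot_nhdsNE
  obtain ⟨U', hU'U, V', hV'V, hU', hU'n, hV', hV'n, hdisj⟩ :=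
    exists_isOpen_disjoint_image (continuous_nds hcont le_rfl) N hU₁ hU₁n hV₁ hV₁n
  obtain ⟨n, -, h₁, h₂⟩ := hwm U' U₂ V' V₂ hU' hU'n hU₂ hU₂n hV' hV'n hV₂ hV₂n
  refine ⟨n, lt_of_not_ge fun hn => h₁.not_disjoint (hdisj n hn),
    h₁.mono (inter_subset_inter (image_mono hU'U) hV'V), h₂⟩

end NDS

theorem image_inter_ball_nonempty_of_dist_lt {α X : Type*} [PseudoMetricSpace X] {g h : α → X}
    {ε : ℝ} (hgh : ∀ x, dist (g x) (h x) < ε) {U : Set α} {v : X} {δ : ℝ}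
    (hne : (g '' U ∩ Metric.ball v δ).Nonempty) : (h '' U ∩ Metric.ball v (δ + ε)).Nonempty := by
  obtain ⟨_, ⟨x, hx, rfl⟩, hxv⟩ := hne
  refine ⟨h x, mem_image_of_mem h hx, ?_⟩
  rw [Metric.mem_ball] at hxv ⊢
  calc dist (h x) v ≤ dist (h x) (g x) + dist (g x) v := dist_triangle _ _ _
    _ < ε + δ := add_lt_add_of_lt_of_lt (by rw [dist_comm]; exact hgh x) hxv
    _ = δ + ε := add_comm ε δ

section Shadowing

variable {X : Type*} [MetricSpace X] {f : ℕ → X → X} {F : X → X}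

theorem CollectivelyConverges.eventually_dist_nds_add_lt (hcoll : CollectivelyConverges f F)
    {ε : ℝ} (hε : 0 < ε) :
    ∀ᶠ c in atTop, ∀ k, 0 < k → ∀ x, dist (nds f 1 (c + k) x) (F^[k] (nds f 1 c x)) < ε := by
  obtain ⟨r₀, hr₀⟩ := hcoll ε hε
  filter_upwards [eventually_ge_atTop r₀] with c hc k hk x
  rw [nds_add]
  exact hr₀ (1 + c) (by omega) k hk _

theorem CollectivelyConverges.eventually_hittingTimes_of_nds
    (hcont : ∀ n, 1 ≤ n → Continuous (f n)) (hsurj : ∀ n, 1 ≤ n → Function.Surjective (f n))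
    (hcoll : CollectivelyConverges f F) {U V : Set X} (hU : IsOpen U) (hUn : U.Nonempty)
    (hV : IsOpen V) (hVn : V.Nonempty) :
    ∀ᶠ c in atTop, ∃ U' V', IsOpen U' ∧ U'.Nonempty ∧ IsOpen V' ∧ V'.Nonempty ∧
      ∀ k, 0 < k → (nds f 1 (c + k) '' U' ∩ V').Nonempty → k ∈ hittingTimes F U V := by
  obtain ⟨v, hv⟩ := hVn
  obtain ⟨ε, hε, hball⟩ := Metric.isOpen_iff.1 hV v hv
  filter_upwards [hcoll.eventually_dist_nds_add_lt (half_pos hε)] with c hc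
  refine ⟨nds f 1 c ⁻¹' U, Metric.ball v (ε / 2), hU.preimage (continuous_nds hcont le_rfl c),
    hUn.preimage (surjective_nds hsurj le_rfl c), Metric.isOpen_ball,
    Metric.nonempty_ball.2 (half_pos hε), fun k hk hne => ⟨hk, ?_⟩⟩
  have hF := image_inter_ball_nonempty_of_dist_lt (hc k hk) hne
  rw [add_halves, ← image_image] at hF
  exact hF.mono (inter_subset_inter (image_mono (image_preimage_subset _ _)) hball)

theorem CollectivelyConverges.mapWeaklyMixing (hcont : ∀ n, 1 ≤ n → Continuous (f n))
    (hsurj : ∀ n, 1 ≤ n → Function.Surjective (f n)) (hcoll : CollectivelyConverges f F)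
    (hwm : NDSWeaklyMixing f) : MapWeaklyMixing F := by
  intro U₁ U₂ V₁ V₂ hU₁ hU₁n hU₂ hU₂n hV₁ hV₁n hV₂ hV₂n
  obtain ⟨c, ⟨U₁', V₁', hU₁', hU₁'n, hV₁', hV₁'n, h₁⟩, ⟨U₂', V₂', hU₂', hU₂'n, hV₂', hV₂'n, h₂⟩⟩ :=
    ((hcoll.eventually_hittingTimes_of_nds hcont hsurj hU₁ hU₁n hV₁ hV₁n).and
      (hcoll.eventually_hittingTimes_of_nds hcont hsurj hU₂ hU₂n hV₂ hV₂n)).exists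
  obtain ⟨n, hcn, hn₁, hn₂⟩ :=
    hwm.exists_gt hcont hU₁' hU₁'n hU₂' hU₂'n hV₁' hV₁'n hV₂' hV₂'n c
  obtain ⟨k, rfl⟩ := Nat.exists_eq_add_of_lt hcn
  have hk : 0 < k + 1 := k.succ_pos
  rw [add_assoc] at hn₁ hn₂
  exact ⟨k + 1, hk, (h₁ _ hk hn₁).2, (h₂ _ hk hn₂).2⟩

theorem CollectivelyConverges.mapSyndeticallyTransitive (hcont : ∀ n, 1 ≤ n → Continuous (f n))
    (hsurj : ∀ n, 1 ≤ n → Function.Surjective (f n)) (hcoll : CollectivelyConverges f F)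
    (hsynd : NDSSyndeticallyTransitive f) : MapSyndeticallyTransitive F := by
  intro U V hU hUn hV hVn
  obtain ⟨c, U', V', hU', hU'n, hV', hV'n, h⟩ :=
    (hcoll.eventually_hittingTimes_of_nds hcont hsurj hU hUn hV hVn).exists
  exact ((hsynd U' V' hU' hU'n hV' hV'n).pos_add_left c).mono fun k ⟨hk, _, hne⟩ => h k hk hne

theorem CollectivelyConverges.exists_nds_add_mem_thicklySyndetic (hfo : FeebleOpen f)
    (hF : Continuous F) (hFwm : MapWeaklyMixing F) (hFsynd : MapSyndeticallyTransitive F)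
    (hcoll : CollectivelyConverges f F) {U V : Set X} (hU : IsOpen U) (hUn : U.Nonempty)
    (hV : IsOpen V) (hVn : V.Nonempty) :
    ∃ c, {k | 0 < k ∧ (nds f 1 (c + k) '' U ∩ V).Nonempty} ∈ thicklySyndetic := by
  obtain ⟨v, hv⟩ := hVn
  obtain ⟨ε, hε, hball⟩ := Metric.isOpen_iff.1 hV v hv
  obtain ⟨c, hc⟩ := (hcoll.eventually_dist_nds_add_lt (half_pos hε)).exists
  obtain ⟨W, hW, hWn, hWU⟩ := hfo.exists_isOpen_subset_image_nds le_rfl hU hUn c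
  refine ⟨c, mem_of_superset (hittingTimes_mem_thicklySyndetic hF hFwm hFsynd hW hWn
    (Metric.isOpen_ball (x := v)) (Metric.nonempty_ball.2 (half_pos hε))) fun k ⟨hk, hne⟩ =>
      ⟨hk, ?_⟩⟩
  have hshadow : ((fun x => F^[k] (nds f 1 c x)) '' U ∩ Metric.ball v (ε / 2)).Nonempty := by
    rw [← image_image]
    exact hne.mono (inter_subset_inter_left _ (image_mono hWU))
  have hnds := image_inter_ball_nonempty_of_dist_lt
    (fun x => (dist_comm _ _).trans_lt (hc k hk x)) hshadow
  rw [add_halves] at hnds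
  exact hnds.mono (inter_subset_inter_right _ hball)

end Shadowing

theorem NDSMultiTransitive.of_exists_mem_thicklySyndetic {X : Type*} [TopologicalSpace X]
    {f : ℕ → X → X} (h : ∀ U V : Set X, IsOpen U → U.Nonempty → IsOpen V → V.Nonempty →
      ∃ c, {k | 0 < k ∧ (nds f 1 (c + k) '' U ∩ V).Nonempty} ∈ thicklySyndetic) :
    NDSMultiTransitive f := by
  intro m hm U V hU hUn hV hVn
  choose c hc using fun j => h (U j) (V j) (hU j) (hUn j) (hV j) (hVn j)
  have hmem : ⋂ j : Fin m, (((j : ℕ) + 1) * ·) ⁻¹' ((c j + ·) '' _) ∈ thicklySyndetic :=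
    iInter_mem.2 fun j => tendsto_mul_left_thicklySyndetic j.succ_pos
      (image_add_left_mem_thicklySyndetic (hc j) (c j))
  obtain ⟨l, hl⟩ := Filter.nonempty_of_mem hmem
  have hlj : ∀ j : Fin m, ∃ k, 0 < k ∧ (nds f 1 (c j + k) '' U j ∩ V j).Nonempty ∧
      c j + k = l * (j + 1) := fun j => by
    obtain ⟨k, ⟨hk, hne⟩, hkl⟩ := mem_iInter.1 hl j
    exact ⟨k, hk, hne, hkl.trans (mul_comm _ _)⟩
  obtain ⟨k, hk, -, hkl⟩ := hlj ⟨0, hm⟩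
  rw [Fin.val_mk, zero_add, mul_one] at hkl
  refine ⟨l, by omega, fun j => ?_⟩
  obtain ⟨k, -, hne, hkl⟩ := hlj j
  rwa [← hkl]

theorem syndeticTransitive_weaklyMixing_implies_multiTransitive_general {X : Type*} [MetricSpace X]
    (f : ℕ → X → X) (F : X → X)
    (hcont : ∀ n : ℕ, 1 ≤ n → Continuous (f n))
    (hfo : FeebleOpen f)
    (hsurj : ∀ n : ℕ, 1 ≤ n → Function.Surjective (f n))
    (hF : Continuous F)
    (hcoll : CollectivelyConverges f F)
    (hsynd : NDSSyndeticallyTransitive f) (hwm : NDSWeaklyMixing f) :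
    NDSMultiTransitive f :=
  NDSMultiTransitive.of_exists_mem_thicklySyndetic fun _ _ hU hUn hV hVn =>
    hcoll.exists_nds_add_mem_thicklySyndetic hfo hF (hcoll.mapWeaklyMixing hcont hsurj hwm)
      (hcoll.mapSyndeticallyTransitive hcont hsurj hsynd) hU hUn hV hVn

theorem syndeticTransitive_weaklyMixing_implies_multiTransitive {X : Type*} [MetricSpace X]
    [CompactSpace X]
    (f : ℕ → X → X) (F : X → X)
    (hcont : ∀ n : ℕ, 1 ≤ n → Continuous (f n))
    (hfo : FeebleOpen f)
    (hsurj : ∀ n : ℕ, 1 ≤ n → Function.Surjective (f n))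
    (hF : Continuous F)
    (hunif : TendstoUniformly (fun n x => f n x) F Filter.atTop)
    (hcoll : CollectivelyConverges f F)
    (hsynd : NDSSyndeticallyTransitive f) (hwm : NDSWeaklyMixing f) :
    NDSMultiTransitive f :=
  syndeticTransitive_weaklyMixing_implies_multiTransitive_general f F hcont hfo hsurj hF hcoll hsynd
    hwm
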